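/- For each integer k ≥ 2 with m = 2^{k−1}+1, the FLDR expected entropy cost (2^k/m)·(ν(2/2^k) + 2ν((2^{k−1}−1)/2^k)) equals 6·(2^{k−1}−1)/(2^{k−1}+1), and hence the FLDR entropy toll, this cost minus H_b(2/m), exceeds 6 − (2k+1)/2^{k−3}. Consequently the supremum over distributions of the FLDR toll is 6. -/

import Mathlib

noncomputable def epsBit (d : ℕ) (x : ℝ) : ℝ := ((⌊2 ^ d * x⌋ % 2 : ℤ) : ℝ)

noncomputable def nu (x : ℝ) : ℝ := ∑' d : ℕ, (d : ℝ) * epsBit d x / 2 ^ d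

noncomputable def binEntropy (p : ℝ) : ℝ :=
  p * Real.logb 2 (1 / p) + (1 - p) * Real.logb 2 (1 / (1 - p))

/-- Expected entropy cost of FLDR for integer weights `a : Fin n → ℕ`
with sum `m` and depth `k = ⌈log₂ m⌉`. -/
noncomputable def fldrCost (n : ℕ) (a : Fin n → ℕ) : ℝ :=
  let m : ℕ := ∑ i, a i
  let k : ℕ := Nat.clog 2 m
  ((2 : ℝ) ^ k / m) *
    (nu ((((2 : ℕ) ^ k - m : ℕ) : ℝ) / 2 ^ k) + ∑ i, nu ((a i : ℝ) / 2 ^ k))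

/-- Shannon entropy of the distribution with integer weights `a`. -/
noncomputable def shEntropy (n : ℕ) (a : Fin n → ℕ) : ℝ :=
  let m : ℕ := ∑ i, a i
  ∑ i, ((a i : ℝ) / m) * Real.logb 2 ((m : ℝ) / a i)

noncomputable def fldrToll (n : ℕ) (a : Fin n → ℕ) : ℝ :=
  fldrCost n a - shEntropy n a

/-!
For a dyadic `x = j / 2 ^ k` one has `ν x = S(j, k) / 2 ^ k` where
`S(j, k) = ∑_{i < k} j % 2 ^ (i + 1)` (`sumModPow`), so the FLDR cost of weights `a` with
`m = ∑ aᵢ` is `(S(2 ^ k - m, k) + ∑ S(aᵢ, k)) / m`. Splitting `S(j, k)` at `i = ⌊log₂ j⌋` and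
using the convexity of `y log y` on `[1, 2]` gives `S(j, k) ≤ j (k + 2 - log₂ j)`. Summed over
the `aᵢ` this cancels the entropy up to `m (k + 2 - log₂ m) ≤ 3m`, and for the complementary
weight `2 ^ k - m ≤ m` it gives another `3m`, so the toll is at most `6`.
For `a = (2 ^ t - 1, 2)` the sums `S` are explicit: the cost is `6 (2 ^ t - 1) / (2 ^ t + 1)`
while the entropy is `O(t / 2 ^ t)`, so these tolls tend to `6`.
-/

open Finset Real Filter Topology

def sumModPow (j k : ℕ) : ℕ := ∑ i ∈ range k, j % 2 ^ (i + 1)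

lemma sum_range_bit_mul_two_pow (j k : ℕ) :
    ∑ i ∈ range k, j / 2 ^ i % 2 * 2 ^ i = j % 2 ^ k := by
  induction k with
  | zero => simp [Nat.mod_one]
  | succ k ih => rw [sum_range_succ, ih, pow_succ, Nat.mod_mul]; ring

lemma sumModPow_succ (j k : ℕ) : sumModPow j (k + 1) = sumModPow j k + j % 2 ^ (k + 1) :=
  sum_range_succ _ _

lemma sum_range_sub_mul_bit_mul_two_pow (j k : ℕ) :
    ∑ i ∈ range (k + 1), (k - i) * (j / 2 ^ i % 2) * 2 ^ i = sumModPow j k := by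
  induction k with
  | zero => simp [sumModPow]
  | succ k ih =>
    rw [sumModPow_succ, ← ih, ← sum_range_bit_mul_two_pow, sum_range_succ, Nat.sub_self,
      zero_mul, zero_mul, add_zero, ← sum_add_distrib]
    refine sum_congr rfl fun i hi => ?_
    rw [mem_range] at hi
    rw [show k + 1 - i = k - i + 1 by omega]
    ring

lemma epsBit_natCast_div_two_pow_of_le {j k d : ℕ} (hd : d ≤ k) :
    epsBit d (j / 2 ^ k) = (j / 2 ^ (k - d) % 2 : ℕ) := by
  have h : (2 : ℝ) ^ d * (j / 2 ^ k) = j / (2 ^ (k - d) : ℕ) := by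
    rw [← Nat.sub_add_cancel hd]
    push_cast
    rw [Nat.add_sub_cancel, pow_add]
    field_simp
  rw [epsBit, h, Int.floor_div_natCast, Int.floor_natCast]
  norm_cast

lemma epsBit_natCast_div_two_pow_of_lt {j k d : ℕ} (hd : k < d) :
    epsBit d (j / 2 ^ k) = 0 := by
  have h : (2 : ℝ) ^ d * (j / 2 ^ k) = (j * 2 ^ (d - k) : ℕ) := by
    rw [← Nat.sub_add_cancel hd.le]
    push_cast
    rw [Nat.add_sub_cancel, pow_add]
    field_simp
  have heven : 2 ∣ j * 2 ^ (d - k) := dvd_mul_of_dvd_right (dvd_pow_self 2 (by omega)) j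
  rw [epsBit, h, Int.floor_natCast]
  norm_cast
  omega

theorem nu_natCast_div_two_pow (j k : ℕ) : nu (j / 2 ^ k) = sumModPow j k / 2 ^ k := by
  rw [nu, tsum_eq_sum (s := range (k + 1)) fun d hd => by
    rw [epsBit_natCast_div_two_pow_of_lt (by simpa using hd), mul_zero, zero_div]]
  rw [← sum_range_sub_mul_bit_mul_two_pow, ← sum_range_reflect, Nat.cast_sum, sum_div]
  refine sum_congr rfl fun d hd => ?_
  have hd : d ≤ k := Nat.lt_succ_iff.mp (mem_range.mp hd)
  rw [show k + 1 - 1 - d = k - d by omega, epsBit_natCast_div_two_pow_of_le (Nat.sub_le k d),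
    Nat.sub_sub_self hd, ← Nat.sub_add_cancel hd]
  push_cast
  rw [Nat.add_sub_cancel, pow_add]
  field_simp

lemma mul_logb_le_two_mul_sub_one {y : ℝ} (h1 : 1 ≤ y) (h2 : y ≤ 2) :
    y * logb 2 y ≤ 2 * (y - 1) := by
  have hconv := convexOn_mul_log.2 (Set.mem_Ici.mpr zero_le_one) (Set.mem_Ici.mpr zero_le_two)
    (by linarith : (0 : ℝ) ≤ 2 - y) (by linarith : (0 : ℝ) ≤ y - 1) (by ring)
  simp only [smul_eq_mul, log_one, mul_zero, mul_one] at hconv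
  rw [show (2 - y) + (y - 1) * 2 = y by ring] at hconv
  rw [logb, ← mul_div_assoc, div_le_iff₀ (log_pos one_lt_two)]
  linarith

lemma mul_logb_le {x : ℝ} {L : ℕ} (hL : 2 ^ L ≤ x) (hx : x ≤ 2 ^ (L + 1)) :
    x * logb 2 x ≤ L * x + 2 * x - 2 ^ (L + 1) := by
  have hpos : (0 : ℝ) < 2 ^ L := by positivity
  have hy1 : 1 ≤ x / 2 ^ L := (one_le_div hpos).mpr hL
  have hy := mul_logb_le_two_mul_sub_one hy1 ((div_le_iff₀' hpos).mpr (by rwa [← pow_succ]))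
  set y := x / 2 ^ L
  have hxy : x = 2 ^ L * y := by simp only [y]; field_simp
  have hscaled := mul_le_mul_of_nonneg_left hy hpos.le
  rw [hxy, logb_mul hpos.ne' (by positivity), logb_pow, logb_self_eq_one one_lt_two, pow_succ]
  linarith

lemma mul_logb_div_le {x y : ℝ} (hx : 0 ≤ x) (hxy : x ≤ y) :
    x * logb 2 (y / x) ≤ 2 * (y - x) := by
  rcases hx.eq_or_lt with rfl | hx
  · rw [zero_mul]; linarith
  have hlog : log (y / x) ≤ y / x - 1 := log_le_sub_one_of_pos (div_pos (hx.trans_le hxy) hx)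
  have hln2 : 1 / 2 < log 2 := by linarith [log_two_gt_d9]
  have hnonneg : 0 ≤ y / x - 1 := by rw [sub_nonneg, one_le_div hx]; exact hxy
  have hslack := mul_nonneg hnonneg (by linarith : (0 : ℝ) ≤ 2 * log 2 - 1)
  have : logb 2 (y / x) ≤ 2 * (y / x - 1) := by
    rw [logb, div_le_iff₀ (by linarith)]
    linarith
  calc x * logb 2 (y / x) ≤ x * (2 * (y / x - 1)) := mul_le_mul_of_nonneg_left this hx.le
    _ = 2 * (y - x) := by field_simp

lemma sumModPow_add_log_mul_le {j k : ℕ} (hj : j ≠ 0) (hjk : j ≤ 2 ^ k) :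
    sumModPow j k + Nat.log 2 j * j ≤ k * j + 2 ^ (Nat.log 2 j + 1) := by
  set L := Nat.log 2 j
  have hLk : L ≤ k := Nat.le_of_lt_succ <| (Nat.pow_lt_pow_iff_right one_lt_two).mp <|
    (Nat.pow_log_le_self 2 hj).trans_lt (hjk.trans_lt (Nat.pow_lt_pow_succ one_lt_two))
  have hlow : ∑ i ∈ range L, j % 2 ^ (i + 1) ≤ 2 ^ (L + 1) :=
    calc ∑ i ∈ range L, j % 2 ^ (i + 1)
        ≤ ∑ i ∈ range L, 2 * 2 ^ i := sum_le_sum fun i _ => by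
          rw [← pow_succ']; exact (Nat.mod_lt _ (by positivity)).le
      _ ≤ 2 ^ (L + 1) := by
        rw [← mul_sum, pow_succ']
        exact Nat.mul_le_mul_left 2 (Nat.geomSum_lt le_rfl (by simp)).le
  have hhigh : ∑ i ∈ Ico L k, j % 2 ^ (i + 1) ≤ (k - L) * j :=
    calc ∑ i ∈ Ico L k, j % 2 ^ (i + 1)
        ≤ ∑ i ∈ Ico L k, j := sum_le_sum fun i _ => Nat.mod_le _ _
      _ = (k - L) * j := by rw [sum_const, Nat.card_Ico, smul_eq_mul]
  have hsplit := sum_range_add_sum_Ico (fun i => j % 2 ^ (i + 1)) hLk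
  have hkL : (k - L) * j + L * j = k * j := by rw [← add_mul, Nat.sub_add_cancel hLk]
  rw [sumModPow, ← hsplit]
  omega

theorem sumModPow_le {j k : ℕ} (hjk : j ≤ 2 ^ k) :
    (sumModPow j k : ℝ) ≤ j * (k + 2) - j * logb 2 j := by
  rcases Nat.eq_zero_or_pos j with rfl | hj
  · simp [sumModPow]
  have hnat : (sumModPow j k : ℝ) + Nat.log 2 j * j ≤ k * j + 2 ^ (Nat.log 2 j + 1) := by
    exact_mod_cast sumModPow_add_log_mul_le hj.ne' hjk
  have hlog := mul_logb_le (x := j) (L := Nat.log 2 j)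
    (by exact_mod_cast Nat.pow_log_le_self 2 hj.ne')
    (by exact_mod_cast (Nat.lt_pow_succ_log_self one_lt_two j).le)
  linarith

theorem fldrCost_eq {n : ℕ} (a : Fin n → ℕ) {m k : ℕ} (hm : ∑ i, a i = m)
    (hk : Nat.clog 2 m = k) :
    fldrCost n a = ((sumModPow (2 ^ k - m) k : ℝ) + ∑ i, (sumModPow (a i) k : ℝ)) / m := by
  simp only [fldrCost, hm, hk, nu_natCast_div_two_pow, ← sum_div, ← add_div]
  rcases Nat.eq_zero_or_pos m with rfl | hm0
  · simp
  · field_simp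

theorem shEntropy_eq {n : ℕ} (a : Fin n → ℕ) {m : ℕ} (hm : ∑ i, a i = m) :
    shEntropy n a = (m * logb 2 m - ∑ i, (a i : ℝ) * logb 2 (a i)) / m := by
  have hmR : (m : ℝ) = ∑ i, (a i : ℝ) := by rw [← hm]; push_cast; rfl
  simp only [shEntropy, hm]
  rw [hmR, sum_mul, ← sum_sub_distrib, sum_div]
  refine sum_congr rfl fun i _ => ?_
  rw [← hmR]
  rcases Nat.eq_zero_or_pos (a i) with h | h
  · simp [h]
  rcases Nat.eq_zero_or_pos m with rfl | hm0
  · simp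
  rw [logb_div (by positivity) (by positivity)]
  ring

lemma two_pow_clog_le_two_mul {m : ℕ} (hm : m ≠ 0) : 2 ^ Nat.clog 2 m ≤ 2 * m := by
  rcases Nat.lt_or_ge 1 m with h | h
  · have := Nat.pow_pred_clog_lt_self one_lt_two h
    rw [← Nat.succ_pred_eq_of_pos (Nat.clog_pos one_lt_two h), pow_succ]
    omega
  · obtain rfl : m = 1 := by omega
    simp

theorem fldrToll_le_six (n : ℕ) (a : Fin n → ℕ) : fldrToll n a ≤ 6 := by
  set m := ∑ i, a i with hm
  set k := Nat.clog 2 m with hk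
  rw [fldrToll, fldrCost_eq a hm.symm hk.symm, shEntropy_eq a hm.symm, ← sub_div]
  rcases Nat.eq_zero_or_pos m with hm0 | hm0
  · simp [hm0]
  have hmR : (0 : ℝ) < m := by exact_mod_cast hm0
  have hmk : m ≤ 2 ^ k := Nat.le_pow_clog one_lt_two m
  have hkm : 2 ^ k ≤ 2 * m := two_pow_clog_le_two_mul hm0.ne'
  have hklog : (k : ℝ) ≤ logb 2 m + 1 := by
    have : (2 : ℝ) ^ k ≤ 2 * m := by exact_mod_cast hkm
    calc (k : ℝ) = logb 2 (2 ^ k) := by rw [logb_pow, logb_self_eq_one one_lt_two, mul_one]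
      _ ≤ logb 2 (2 * m) := logb_le_logb_of_le one_lt_two (by positivity) this
      _ = logb 2 m + 1 := by
        rw [logb_mul two_ne_zero hmR.ne', logb_self_eq_one one_lt_two, add_comm]
  set Z := 2 ^ k - m
  have hZm : (Z : ℝ) ≤ m := by exact_mod_cast (show Z ≤ m by omega)
  have hZ := sumModPow_le (show Z ≤ 2 ^ k by omega)
  have hZlog : (Z : ℝ) * logb 2 (m / Z) ≤ 2 * (m - Z) := mul_logb_div_le (by positivity) hZm
  have hZlog' : (Z : ℝ) * logb 2 (m / Z) = Z * logb 2 m - Z * logb 2 Z := by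
    rcases Nat.eq_zero_or_pos Z with h | h
    · simp [h]
    · rw [logb_div hmR.ne' (by positivity)]; ring
  have ha :
      ∑ i, (sumModPow (a i) k : ℝ) ≤ ∑ i, ((a i : ℝ) * (k + 2) - a i * logb 2 (a i)) :=
    sum_le_sum fun i _ => sumModPow_le ((single_le_sum (by simp) (mem_univ i)).trans hmk)
  have hmsum : ∑ i, (a i : ℝ) = m := by rw [hm, Nat.cast_sum]
  rw [sum_sub_distrib, ← sum_mul, hmsum] at ha
  have hmk_log := mul_le_mul_of_nonneg_left hklog hmR.le
  have hZk_log := mul_le_mul_of_nonneg_left hklog (Nat.cast_nonneg Z)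
  rw [div_le_iff₀ hmR]
  linarith

lemma sumModPow_two (k : ℕ) : sumModPow 2 (k + 1) = 2 * k := by
  induction k with
  | zero => rfl
  | succ k ih =>
    rw [sumModPow_succ, ih, Nat.mod_eq_of_lt]
    · ring
    · calc 2 < 2 ^ 2 := by norm_num
        _ ≤ 2 ^ (k + 1 + 1) := Nat.pow_le_pow_right two_pos (by omega)

lemma two_pow_sub_one_mod_two_pow {s t : ℕ} (h : s ≤ t) : (2 ^ t - 1) % 2 ^ s = 2 ^ s - 1 := by
  obtain ⟨r, rfl⟩ := Nat.exists_eq_add_of_le h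
  have h2s : 1 ≤ 2 ^ s := Nat.one_le_two_pow
  have h2r : 1 ≤ 2 ^ r := Nat.one_le_two_pow
  have hsplit : 2 ^ (s + r) - 1 = 2 ^ s - 1 + 2 ^ s * (2 ^ r - 1) := by
    rw [pow_add]
    zify [h2s, h2r, Nat.one_le_two_pow.trans (Nat.le_mul_of_pos_right _ h2r)]
    ring
  rw [hsplit, Nat.add_mul_mod_self_left, Nat.mod_eq_of_lt (by omega)]

lemma sum_range_two_pow_succ_sub_one (t : ℕ) :
    ∑ i ∈ range t, (2 ^ (i + 1) - 1) + t + 2 = 2 ^ (t + 1) := by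
  induction t with
  | zero => rfl
  | succ t ih =>
    have : 1 ≤ 2 ^ (t + 1) := Nat.one_le_two_pow
    rw [sum_range_succ, pow_succ 2 (t + 1)]
    omega

lemma sumModPow_two_pow_sub_one (t : ℕ) : sumModPow (2 ^ t - 1) (t + 1) + t + 3 = 3 * 2 ^ t := by
  have hlast : (2 ^ t - 1) % 2 ^ (t + 1) = 2 ^ t - 1 :=
    Nat.mod_eq_of_lt ((Nat.sub_le _ _).trans_lt (Nat.pow_lt_pow_succ one_lt_two))
  have hinit : sumModPow (2 ^ t - 1) t = ∑ i ∈ range t, (2 ^ (i + 1) - 1) :=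
    sum_congr rfl fun i hi => two_pow_sub_one_mod_two_pow (mem_range.mp hi)
  have hgeom := sum_range_two_pow_succ_sub_one t
  have : 1 ≤ 2 ^ t := Nat.one_le_two_pow
  rw [pow_succ] at hgeom
  rw [sumModPow_succ, hlast, hinit]
  omega

lemma univ_gcd_two_pow_sub_one_two {t : ℕ} (ht : 1 ≤ t) : univ.gcd ![2 ^ t - 1, 2] = 1 := by
  have hodd : Odd (2 ^ t - 1) :=
    Nat.Even.sub_odd Nat.one_le_two_pow ((Nat.even_pow' (by omega)).2 even_two) odd_one
  rw [Fin.univ_succ, gcd_cons]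
  simp only [Matrix.cons_val_zero, univ_unique, map_singleton, gcd_singleton, normalize_eq]
  exact Nat.coprime_two_right.2 hodd

lemma sum_two_pow_sub_one_two (t : ℕ) : ∑ i, ![2 ^ t - 1, 2] i = 2 ^ t + 1 := by
  have : 1 ≤ 2 ^ t := Nat.one_le_two_pow
  rw [Fin.sum_univ_two, Matrix.cons_val_zero, Matrix.cons_val_one, Matrix.cons_val_fin_one]
  omega

lemma clog_two_pow_add_one (t : ℕ) : Nat.clog 2 (2 ^ t + 1) = t + 1 := by
  have : 1 ≤ 2 ^ t := Nat.one_le_two_pow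
  refine le_antisymm (Nat.clog_le_of_le_pow ?_) ((Nat.lt_clog_iff_pow_lt one_lt_two).2 (by omega))
  rw [pow_succ]
  omega

theorem fldrCost_two_pow_sub_one_two (t : ℕ) :
    fldrCost 2 ![2 ^ t - 1, 2] = 6 * ((2 : ℝ) ^ t - 1) / ((2 : ℝ) ^ t + 1) := by
  have hZ : 2 ^ (t + 1) - (2 ^ t + 1) = 2 ^ t - 1 := by rw [pow_succ]; omega
  have hnum : 2 * sumModPow (2 ^ t - 1) (t + 1) + sumModPow 2 (t + 1) + 6 = 6 * 2 ^ t := by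
    have := sumModPow_two_pow_sub_one t
    rw [sumModPow_two]
    omega
  have hnumR :
      2 * (sumModPow (2 ^ t - 1) (t + 1) : ℝ) + sumModPow 2 (t + 1) = 6 * 2 ^ t - 6 := by
    rw [eq_sub_iff_add_eq]; exact_mod_cast hnum
  rw [fldrCost_eq _ (sum_two_pow_sub_one_two t) (clog_two_pow_add_one t), hZ, Fin.sum_univ_two,
    Matrix.cons_val_zero, Matrix.cons_val_one, Matrix.cons_val_fin_one]
  push_cast
  rw [← add_assoc, ← two_mul, hnumR]
  ring

theorem shEntropy_two_pow_sub_one_two_le {t : ℕ} (ht : 1 ≤ t) :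
    shEntropy 2 ![2 ^ t - 1, 2] ≤ (2 * t + 4) / ((2 : ℝ) ^ t + 1) := by
  set c : ℝ := 2 ^ t
  have hc : 2 ≤ c := le_self_pow₀ one_le_two (by omega)
  have hlogc : logb 2 c = t := by rw [logb_pow, logb_self_eq_one one_lt_two, mul_one]
  have hfirst : (c - 1) * logb 2 ((c + 1) / (c - 1)) ≤ 4 := by
    have := mul_logb_div_le (by linarith : 0 ≤ c - 1) (by linarith : c - 1 ≤ c + 1)
    linarith
  have hsecond : logb 2 ((c + 1) / 2) ≤ t := by
    rw [← hlogc]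
    exact logb_le_logb_of_le one_lt_two (by positivity) (by linarith)
  have hc1 : ((2 ^ t - 1 : ℕ) : ℝ) = c - 1 := by push_cast [Nat.one_le_two_pow]; rfl
  have hc2 : ((2 ^ t + 1 : ℕ) : ℝ) = c + 1 := by push_cast; rfl
  rw [logb_div (by positivity) (by linarith)] at hfirst
  rw [logb_div (by positivity) two_ne_zero, logb_self_eq_one one_lt_two] at hsecond
  rw [shEntropy_eq _ (sum_two_pow_sub_one_two t), Fin.sum_univ_two, Matrix.cons_val_zero,
    Matrix.cons_val_one, Matrix.cons_val_fin_one, hc1, hc2, Nat.cast_ofNat,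
    logb_self_eq_one one_lt_two]
  gcongr
  linarith

theorem fldrToll_two_pow_sub_one_two_gt {t : ℕ} (ht : 1 ≤ t) :
    6 - 4 * (2 * t + 3) / (2 : ℝ) ^ t < fldrToll 2 ![2 ^ t - 1, 2] := by
  have hc : (2 : ℝ) ≤ 2 ^ t := le_self_pow₀ one_le_two (by omega)
  have htR : (1 : ℝ) ≤ t := by exact_mod_cast ht
  have hH := shEntropy_two_pow_sub_one_two_le ht
  rw [fldrToll, fldrCost_two_pow_sub_one_two]
  suffices 6 - 4 * (2 * t + 3) / (2 : ℝ) ^ t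
      < 6 * (2 ^ t - 1) / (2 ^ t + 1) - (2 * t + 4) / (2 ^ t + 1) by
    linarith
  rw [← sub_div, sub_lt_iff_lt_add, div_add_div _ _ (by positivity) (by positivity),
    lt_div_iff₀ (by positivity)]
  nlinarith

lemma tendsto_six_sub_div_two_pow :
    Tendsto (fun t : ℕ => 6 - 4 * (2 * t + 3) / (2 : ℝ) ^ t) atTop (𝓝 6) := by
  have h := ((tendsto_pow_const_div_const_pow_of_one_lt 1 one_lt_two).const_mul 8).add
    ((tendsto_pow_const_div_const_pow_of_one_lt 0 one_lt_two).const_mul 12)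
  rw [mul_zero, mul_zero, add_zero] at h
  simpa [sub_eq_add_neg] using (tendsto_const_nhds (x := (6 : ℝ))).sub (h.congr fun t => by ring)

theorem fldr_toll_tight :
    (∀ k : ℕ, 2 ≤ k →
      fldrCost 2 ![2 ^ (k - 1) - 1, 2]
        = 6 * ((2 : ℝ) ^ (k - 1) - 1) / ((2 : ℝ) ^ (k - 1) + 1) ∧
      fldrToll 2 ![2 ^ (k - 1) - 1, 2]
        > 6 - (2 * (k : ℝ) + 1) / (2 : ℝ) ^ ((k : ℤ) - 3)) ∧
    IsLUB {t : ℝ | ∃ (n : ℕ) (a : Fin n → ℕ), (∀ i, 0 < a i) ∧ Finset.univ.gcd a = 1 ∧ t = fldrToll n a} 6 := by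
  refine ⟨fun k hk => ?_, ?_, fun b hb => ?_⟩
  · obtain ⟨t, rfl⟩ : ∃ t, k = t + 1 := ⟨k - 1, by omega⟩
    have hzpow : (2 : ℝ) ^ (((t + 1 : ℕ) : ℤ) - 3) = 2 ^ t / 4 := by
      rw [zpow_sub₀ two_ne_zero, zpow_natCast, pow_succ]
      ring
    rw [Nat.add_sub_cancel, hzpow]
    refine ⟨fldrCost_two_pow_sub_one_two t,
      lt_of_eq_of_lt ?_ (fldrToll_two_pow_sub_one_two_gt (by omega))⟩
    push_cast
    field_simp
    ring
  · rintro _ ⟨n, a, -, -, rfl⟩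
    exact fldrToll_le_six n a
  · refine le_of_tendsto tendsto_six_sub_div_two_pow (eventually_atTop.2 ⟨1, fun t ht => ?_⟩)
    have hpos : ∀ i, 0 < ![2 ^ t - 1, 2] i :=
      Fin.forall_fin_two.2 ⟨Nat.sub_pos_of_lt (Nat.one_lt_two_pow (by omega)), two_pos⟩
    exact (fldrToll_two_pow_sub_one_two_gt ht).le.trans
      (hb ⟨2, _, hpos, univ_gcd_two_pow_sub_one_two ht, rfl⟩)
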